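/- Let A ∈ ℝ^{n×n} be symmetric positive semidefinite and let ω > 0 satisfy ω⟨Ax, x⟩ ≤ ‖x‖² for all x (i.e., the spectral radius of ωA is at most 1). Set S = I − ω·A. Then for every positive integer ν and every u ∈ ℝ^n, the A-norm of the smoothed vector satisfies ‖Sᵛu‖_A² = ⟨A Sᵛu, Sᵛu⟩ ≤ ‖u‖² / (ω(2ν + 1)). -/

import Mathlib

/-!
Put `B = ω A`. Positive semidefiniteness and the hypothesis on `ω` say `0 ≤ B ≤ 1` in the Loewner
order, so the spectrum of `B` lies in `[0, 1]`. Since `S` is symmetric and commutes with `A`,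
`ω ‖Sᵛ u‖_A² = ⟨B (1 - B)^{2ν} u, u⟩`, and by the continuous functional calculus
`B (1 - B)^{2ν} ≤ (max_{t ∈ [0,1]} t (1 - t)^{2ν}) • 1 ≤ (2ν + 1)⁻¹ • 1`; the scalar bound is Bernoulli's
inequality `1 + m t ≤ (1 + t)^m` combined with `(1 - t)^m (1 + t)^m ≤ 1`.
-/

open Matrix

lemma mul_one_sub_pow_le_inv_succ {t : ℝ} (ht₀ : 0 ≤ t) (ht₁ : t ≤ 1) (m : ℕ) :
    t * (1 - t) ^ m ≤ ((m : ℝ) + 1)⁻¹ := by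
  have hpow : 0 ≤ (1 - t) ^ m := pow_nonneg (by linarith) m
  have hbern : 1 + m * t ≤ (1 + t) ^ m := one_add_mul_le_pow (by linarith) m
  rw [← one_div, le_div_iff₀ (by positivity)]
  calc t * (1 - t) ^ m * (m + 1) ≤ (1 + m * t) * (1 - t) ^ m := by nlinarith
    _ ≤ (1 + t) ^ m * (1 - t) ^ m := by gcongr
    _ = (1 - t ^ 2) ^ m := by rw [← mul_pow]; ring
    _ ≤ 1 := pow_le_one₀ (by nlinarith) (by nlinarith)

lemma IsSelfAdjoint.mul_one_sub_pow {R : Type*} [Ring R] [StarRing R] {a : R}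
    (ha : IsSelfAdjoint a) (m : ℕ) : IsSelfAdjoint (a * (1 - a) ^ m) :=
  (ha.commute_iff (((IsSelfAdjoint.one R).sub ha).pow m)).1
    (((Commute.one_right a).sub_right (Commute.refl a)).pow_right m)

section

variable {𝔄 : Type*} [TopologicalSpace 𝔄] [Ring 𝔄] [StarRing 𝔄] [PartialOrder 𝔄]
  [StarOrderedRing 𝔄] [Algebra ℝ 𝔄] [ContinuousFunctionalCalculus ℝ 𝔄 IsSelfAdjoint]
  [NonnegSpectrumClass ℝ 𝔄]

lemma IsSelfAdjoint.mul_one_sub_pow_le_inv_succ {a : 𝔄} (ha : IsSelfAdjoint a) (ha₀ : 0 ≤ a)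
    (ha₁ : a ≤ 1) (m : ℕ) : a * (1 - a) ^ m ≤ algebraMap ℝ 𝔄 ((m : ℝ) + 1)⁻¹ := by
  have hcfc : cfc (fun t : ℝ ↦ t * (1 - t) ^ m) a = a * (1 - a) ^ m := by
    rw [cfc_mul _ _ a, cfc_pow _ _ a, cfc_sub _ _ a, cfc_const_one ℝ a, cfc_id' ℝ a]
  rw [← hcfc]
  refine cfc_le_algebraMap _ _ a fun t ht ↦ _root_.mul_one_sub_pow_le_inv_succ ?_ ?_ m
  · exact (StarOrderedRing.nonneg_iff_spectrum_nonneg a).1 ha₀ t ht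
  · exact (le_algebraMap_iff_spectrum_le (r := (1 : ℝ))).1 (by simpa using ha₁) t ht

end

open scoped MatrixOrder

namespace Matrix

variable {n : Type*} [Fintype n] [DecidableEq n]

lemma mulVec_mulVec_dotProduct_mulVec {α : Type*} [CommSemiring α] {A T : Matrix n n α}
    (hT : T.IsSymm) (hAT : Commute A T) (u : n → α) :
    (A *ᵥ (T *ᵥ u)) ⬝ᵥ (T *ᵥ u) = u ⬝ᵥ ((A * T ^ 2) *ᵥ u) := by
  have hTu : T *ᵥ u = u ᵥ* T := by rw [← vecMul_transpose, hT.eq]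
  calc (A *ᵥ (T *ᵥ u)) ⬝ᵥ (T *ᵥ u) = (T *ᵥ u) ⬝ᵥ ((A * T) *ᵥ u) := by
        rw [dotProduct_comm, mulVec_mulVec]
    _ = u ⬝ᵥ ((T * (A * T)) *ᵥ u) := by rw [hTu, ← dotProduct_mulVec, mulVec_mulVec]
    _ = u ⬝ᵥ ((A * T ^ 2) *ᵥ u) := by rw [← mul_assoc, ← hAT.eq, mul_assoc, sq]

lemma le_algebraMap_iff_dotProduct_mulVec_le {M : Matrix n n ℝ}
    (hM : M.IsHermitian) (c : ℝ) :
    M ≤ algebraMap ℝ _ c ↔ ∀ x, x ⬝ᵥ (M *ᵥ x) ≤ c * (x ⬝ᵥ x) := by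
  have hN : (c • 1 - M).IsHermitian := (isHermitian_one.smul (IsSelfAdjoint.all c)).sub hM
  rw [Algebra.algebraMap_eq_smul_one, le_iff, posSemidef_iff_dotProduct_mulVec, and_iff_right hN]
  simp only [star_trivial, sub_mulVec, smul_mulVec, one_mulVec, dotProduct_sub, dotProduct_smul,
    smul_eq_mul, sub_nonneg]

end Matrix

/-- Smoothing property of the Richardson smoother `S = I - ω A`: if `A` is symmetric
positive semidefinite and `ω > 0` satisfies `ω ⟨A x, x⟩ ≤ ‖x‖²` for all `x`, then for
every positive integer `ν` and every `u`, `‖Sᵛ u‖_A² ≤ ‖u‖² / (ω (2ν + 1))`. -/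
theorem stmt_12 {n : ℕ} (A : Matrix (Fin n) (Fin n) ℝ) (hA : A.PosSemidef)
    (ω : ℝ) (hω : 0 < ω) (hspec : ∀ x : Fin n → ℝ, ω * ((A *ᵥ x) ⬝ᵥ x) ≤ x ⬝ᵥ x)
    (S : Matrix (Fin n) (Fin n) ℝ) (hS : S = 1 - ω • A) :
    ∀ ν : ℕ, 0 < ν → ∀ u : Fin n → ℝ,
      (A *ᵥ ((S ^ ν) *ᵥ u)) ⬝ᵥ ((S ^ ν) *ᵥ u) ≤ (u ⬝ᵥ u) / (ω * (2 * ν + 1)) := by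
  intro ν _ u
  set B := ω • A with hB
  have hB_sa : IsSelfAdjoint B := hA.isHermitian.smul (IsSelfAdjoint.all ω)
  have hB₀ : 0 ≤ B := nonneg_iff_posSemidef.2 (hA.smul hω.le)
  have hB₁ : B ≤ 1 := by
    simpa using (le_algebraMap_iff_dotProduct_mulVec_le hB_sa 1).2 fun x ↦ by
      simpa [hB, smul_mulVec, dotProduct_comm] using hspec x
  have hS_symm : S.IsSymm := isHermitian_iff_isSymm.1 (hS ▸ (IsSelfAdjoint.one _).sub hB_sa)
  have hAS : Commute A S := hS ▸ (Commute.one_right A).sub_right ((Commute.refl A).smul_right ω)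
  have hsmooth := (le_algebraMap_iff_dotProduct_mulVec_le (hB_sa.mul_one_sub_pow (2 * ν)) _).1
    (hB_sa.mul_one_sub_pow_le_inv_succ hB₀ hB₁ (2 * ν)) u
  rw [mulVec_mulVec_dotProduct_mulVec (hS_symm.pow ν) (hAS.pow_right ν), ← pow_mul, mul_comm ν]
  rw [hB, ← hS, smul_mul_assoc, smul_mulVec, dotProduct_smul, smul_eq_mul, inv_mul_eq_div,
    le_div_iff₀ (by positivity)] at hsmooth
  rw [le_div_iff₀ (by positivity)]
  push_cast at hsmooth
  linarith
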